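/- Let x ∈ (1/2, 1) be irrational with by-excess digits b_1, b_2, …. Then the regular continued fraction partial quotients of 1 − x are (n_1, b_{t_1} − 2, n_2, b_{t_2} − 2, n_3, …); that is, a_{2j−1}(1−x) = n_j and a_{2j}(1−x) = b_{t_j} − 2 for all j ≥ 1. -/

import Mathlib

open Set Filter

/-! Write `x_n = A_0^n(x)`, so that `1/x_n = b_{n+1} - x_{n+1}`. A digit `b_{n+1} = 2` gives
`1/(1 - x_{n+1}) = 1/(1 - x_n) - 1`, so along a block of digits `2, …, 2, b` with `b ≥ 3`
ending at `x_{p+n-1} = w` we get `1/(1 - x_p) = n + w/(1 - w)`. The digit `b ≥ 3` forces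
`w < 1/2`, hence `w/(1 - w) ∈ (0,1)` is the Gauss image of `1 - x_p`, and
`(1 - w)/w = (b - 2) + (1 - x_{p+n})`. So two Gauss steps carry `1 - x_p` to `1 - x_{p+n}`,
producing the partial quotients `n` and `b - 2`. -/

noncomputable def gmap (t : ℝ) : ℝ := 1 / t - ⌊1 / t⌋

/-- `ra y n = a_{n+1}(y) = ⌊1/G^n(y)⌋`, the regular continued fraction partial
quotients of `y`. -/
noncomputable def ra (y : ℝ) (n : ℕ) : ℤ := ⌊1 / (gmap^[n] y)⌋

noncomputable def exm (x : ℝ) : ℝ := ⌊1 / x + 1⌋ - 1 / x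

/-- `bEx x n = b_{n+1} = ⌊1/A_0^n(x) + 1⌋`, the by-excess digits of `x`. -/
noncomputable def bEx (x : ℝ) (n : ℕ) : ℤ := ⌊1 / (exm^[n] x) + 1⌋

/-- Given the increasing enumeration `t` (0-indexed: `t j` is the paper's `t_{j+1}`),
`nOf t j` is the paper's `n_{j+1}`: `n_1 = t_1` and `n_{j+1} = t_{j+1} − t_j`. -/
def nOf (t : ℕ → ℕ) : ℕ → ℕ
  | 0 => t 0
  | j + 1 => t (j + 1) - t j

lemma floor_one_div_eq_and_gmap_eq {y r : ℝ} {k : ℤ} (hy : 1 / y = k + r) (hr0 : 0 ≤ r)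
    (hr1 : r < 1) : ⌊1 / y⌋ = k ∧ gmap y = r := by
  have hfloor : ⌊1 / y⌋ = k := by
    rw [hy, Int.floor_eq_iff]
    constructor <;> linarith
  exact ⟨hfloor, by rw [gmap, hfloor, hy]; ring⟩

lemma ra_add (y : ℝ) (m n : ℕ) : ra y (m + n) = ra (gmap^[m] y) n := by
  rw [ra, ra, add_comm, Function.iterate_add_apply]

lemma iterate_exm_succ (x : ℝ) (n : ℕ) : exm^[n + 1] x = bEx x n - 1 / exm^[n] x := by
  rw [Function.iterate_succ_apply']
  rfl

lemma one_div_iterate_exm (x : ℝ) (n : ℕ) : 1 / exm^[n] x = bEx x n - exm^[n + 1] x := by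
  rw [iterate_exm_succ]
  ring

lemma Irrational.exm_mem_Ioo {u : ℝ} (hu : Irrational u) : exm u ∈ Ioo 0 1 := by
  have hne : (1 / u + 1 : ℝ) ≠ ⌊1 / u + 1⌋ := by
    simpa [one_div] using (hu.inv.add_intCast 1).ne_int ⌊u⁻¹ + 1⌋
  have hlt : (⌊1 / u + 1⌋ : ℝ) < 1 / u + 1 := lt_of_le_of_ne (Int.floor_le _) hne.symm
  have hgt := Int.sub_one_lt_floor (1 / u + 1)
  constructor <;> simp only [exm] <;> linarith

lemma Irrational.iterate_exm {x : ℝ} (hx : Irrational x) (n : ℕ) : Irrational (exm^[n] x) := by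
  induction n with
  | zero => exact hx
  | succ n ih =>
    rw [iterate_exm_succ, one_div]
    exact ih.inv.intCast_sub _

lemma iterate_exm_mem_Ioo {x : ℝ} (hirr : Irrational x) (hx : x ∈ Ioo 0 1) (n : ℕ) :
    exm^[n] x ∈ Ioo 0 1 := by
  cases n with
  | zero => exact hx
  | succ n =>
    rw [Function.iterate_succ_apply']
    exact (hirr.iterate_exm n).exm_mem_Ioo

lemma two_le_bEx {x : ℝ} (hirr : Irrational x) (hx : x ∈ Ioo 0 1) (n : ℕ) :
    2 ≤ bEx x n := by
  obtain ⟨h0, h1⟩ := iterate_exm_mem_Ioo hirr hx n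
  have := one_lt_one_div h0 h1
  exact Int.le_floor.2 (by push_cast; linarith)

lemma iterate_exm_lt_half {x : ℝ} (hirr : Irrational x) (hx : x ∈ Ioo 0 1) {n : ℕ}
    (hbig : 3 ≤ bEx x n) : exm^[n] x < 1 / 2 := by
  obtain ⟨h0, -⟩ := iterate_exm_mem_Ioo hirr hx n
  have hinv : 2 < 1 / exm^[n] x := by
    have hb : (3 : ℝ) ≤ bEx x n := by exact_mod_cast hbig
    rw [one_div_iterate_exm]
    linarith [(iterate_exm_mem_Ioo hirr hx (n + 1)).2]
  exact (lt_one_div two_pos h0).1 hinv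

lemma one_div_one_sub_iterate_exm_of_bEx_eq_two {x : ℝ} (hirr : Irrational x)
    (hx : x ∈ Ioo 0 1) {n : ℕ} (htwo : bEx x n = 2) :
    1 / (1 - exm^[n] x) = 1 / (1 - exm^[n + 1] x) + 1 := by
  obtain ⟨h0, h1⟩ := iterate_exm_mem_Ioo hirr hx n
  have h1' : 1 - exm^[n] x ≠ 0 := by linarith
  rw [iterate_exm_succ, htwo]
  push_cast
  rw [show (1 : ℝ) - (2 - 1 / exm^[n] x) = (1 - exm^[n] x) / exm^[n] x by field_simp; ring,
    one_div_div]
  field_simp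
  ring

lemma one_div_one_sub_iterate_exm_of_twos {x : ℝ} (hirr : Irrational x) (hx : x ∈ Ioo 0 1)
    (p k : ℕ) (htwo : ∀ i < k, bEx x (p + i) = 2) :
    1 / (1 - exm^[p] x) = 1 / (1 - exm^[p + k] x) + k := by
  induction k with
  | zero => simp
  | succ k ih =>
    rw [ih (fun i hi => htwo i (by omega)),
      one_div_one_sub_iterate_exm_of_bEx_eq_two hirr hx (htwo k (by omega)), ← add_assoc p k 1]
    push_cast
    ring

lemma ra_one_sub_iterate_exm_of_block {x : ℝ} (hirr : Irrational x) (hx : x ∈ Ioo 0 1)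
    (p n : ℕ) (hn : 0 < n) (htwo : ∀ i, i + 1 < n → bEx x (p + i) = 2)
    (hbig : 3 ≤ bEx x (p + n - 1)) :
    ra (1 - exm^[p] x) 0 = n ∧ ra (1 - exm^[p] x) 1 = bEx x (p + n - 1) - 2 ∧
      gmap^[2] (1 - exm^[p] x) = 1 - exm^[p + n] x := by
  obtain ⟨k, rfl⟩ := Nat.exists_eq_add_of_lt hn
  simp only [zero_add, Nat.add_sub_cancel, ← add_assoc] at htwo hbig ⊢
  set w := exm^[p + k] x
  obtain ⟨hw0, hw1⟩ := iterate_exm_mem_Ioo hirr hx (p + k)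
  obtain ⟨hz0, hz1⟩ := iterate_exm_mem_Ioo hirr hx (p + k + 1)
  have hw : w < 1 / 2 := iterate_exm_lt_half hirr hx hbig
  have h1w : 1 - w ≠ 0 := by linarith
  have hfirst : 1 / (1 - exm^[p] x) = ((k + 1 : ℕ) : ℤ) + w / (1 - w) := by
    rw [one_div_one_sub_iterate_exm_of_twos hirr hx p k (fun i hi => htwo i (by omega))]
    push_cast
    field_simp
    ring
  obtain ⟨hra0, hg1⟩ := floor_one_div_eq_and_gmap_eq hfirst (by positivity)
    ((div_lt_one (by linarith)).2 (by linarith))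
  have hsecond :
      1 / (w / (1 - w)) = ((bEx x (p + k) - 2 : ℤ) : ℝ) + (1 - exm^[p + k + 1] x) := by
    rw [one_div_div, sub_div, div_self hw0.ne', one_div_iterate_exm]
    push_cast
    ring
  obtain ⟨hra1, hg2⟩ := floor_one_div_eq_and_gmap_eq hsecond (by linarith) (by linarith)
  refine ⟨hra0, ?_, ?_⟩
  · simpa [ra, hg1] using hra1
  · simpa [hg1] using hg2

def blockStart (t : ℕ → ℕ) : ℕ → ℕ
  | 0 => 0
  | j + 1 => t j

lemma nOf_pos {t : ℕ → ℕ} (ht1 : ∀ j, 1 ≤ t j) (hmono : StrictMono t) (j : ℕ) :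
    0 < nOf t j := by
  cases j with
  | zero => exact ht1 0
  | succ j => simpa [nOf] using hmono j.lt_succ_self

lemma blockStart_add_nOf {t : ℕ → ℕ} (hmono : StrictMono t) (j : ℕ) :
    blockStart t j + nOf t j = t j := by
  cases j with
  | zero => simp [blockStart, nOf]
  | succ j => simpa [blockStart, nOf] using Nat.add_sub_of_le (hmono j.lt_succ_self).le

lemma StrictMono.not_of_blockStart_le {t : ℕ → ℕ} (hmono : StrictMono t) {P : ℕ → Prop}
    (hall : ∀ n, P n → ∃ j, t j = n + 1) {j n : ℕ} (hle : blockStart t j ≤ n)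
    (hlt : n + 1 < t j) :
    ¬ P n := by
  intro hP
  obtain ⟨j', hj'⟩ := hall n hP
  have hj'j : j' < j := hmono.lt_iff_lt.1 (by omega)
  cases j with
  | zero => omega
  | succ j =>
    have : t j < t j' := by simp only [blockStart] at hle; omega
    have := hmono.lt_iff_lt.1 this
    omega

/-- Lemma 2.7: let `x ∈ (1/2,1)` be irrational with by-excess digits `b_1, b_2, …`,
and let `t_1 < t_2 < ⋯` enumerate `{n ≥ 1 : b_n ≥ 3}` (here `t j` is the paper's
`t_{j+1}`). Then the regular continued fraction of `1 − x` is
`(n_1, b_{t_1} − 2, n_2, b_{t_2} − 2, n_3, …)`, i.e. `a_{2j−1}(1−x) = n_j` and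
`a_{2j}(1−x) = b_{t_j} − 2` for all `j ≥ 1`. -/
theorem cf_one_sub_via_excess (x : ℝ) (hirr : Irrational x)
    (hx : x ∈ Set.Ioo (1 / 2 : ℝ) 1) (t : ℕ → ℕ)
    (ht1 : ∀ j, 1 ≤ t j) (hmono : StrictMono t)
    (hmem : ∀ j, 3 ≤ bEx x (t j - 1))
    (hall : ∀ n : ℕ, 3 ≤ bEx x n → ∃ j, t j = n + 1) :
    ∀ j : ℕ, ra (1 - x) (2 * j) = (nOf t j : ℤ) ∧
      ra (1 - x) (2 * j + 1) = bEx x (t j - 1) - 2 := by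
  have hx01 : x ∈ Ioo (0 : ℝ) 1 := ⟨by linarith [hx.1], hx.2⟩
  have htwo (j i : ℕ) (hi : i + 1 < nOf t j) : bEx x (blockStart t j + i) = 2 := by
    have := blockStart_add_nOf hmono j
    have := hmono.not_of_blockStart_le hall (j := j) (n := blockStart t j + i) (by omega) (by omega)
    have := two_le_bEx hirr hx01 (blockStart t j + i)
    omega
  have hblock (j : ℕ) := ra_one_sub_iterate_exm_of_block hirr hx01 (blockStart t j) (nOf t j)
    (nOf_pos ht1 hmono j) (htwo j) (by simpa only [blockStart_add_nOf hmono j] using hmem j)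
  simp only [blockStart_add_nOf hmono] at hblock
  have horbit (j : ℕ) : gmap^[2 * j] (1 - x) = 1 - exm^[blockStart t j] x := by
    induction j with
    | zero => rfl
    | succ j ih =>
      rw [mul_add, mul_one, add_comm, Function.iterate_add_apply, ih, (hblock j).2.2]
      rfl
  intro j
  obtain ⟨hlen, hdigit, -⟩ := hblock j
  rw [← horbit j, ← ra_add] at hlen hdigit
  exact ⟨hlen, hdigit⟩
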